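/- arXiv:1612.00355 — 3 statements merged into one kernel-verified Lean document; each statement's English description precedes it below -/
import Mathlib

section
/- Let I and M be sets and let Φ assign to each pair (α,β) ∈ I×I a binary relation Φ_{αβ} on M. Then Φ satisfies the Sincov inequalities Φ_{αβ}∘Φ_{βγ} ⊆ Φ_{αγ}, Φ_{αβ}⁻¹ ⊆ Φ_{βα}, and Φ_{αα} ⊆ id_M (for all α,β,γ ∈ I) if and only if there exist a set Z and a family {φ_α}_{α∈I} of binary relations φ_α ⊆ Z×M, each of which is both injective and co-injective, such that Φ_{αβ} = φ_α ∘ φ_β⁻¹ for every (α,β) ∈ I×I. -/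
/-!
The Sincov inequalities say exactly that `(β, x) ∼ (α, y) :↔ (x, y) ∈ Φ α β` is a partial
equivalence relation on `I × M` (symmetric and transitive), reflexive exactly at the `(α, m)`
with `(m, m) ∈ Φ α α`. Take `Z` to be the set of its classes and let `φ α` relate the class of
`(α, m)` to `m`. Then `φ α ∘ (φ β)⁻¹ = Φ α β` by construction, and `Φ α α ⊆ id` is what makes
`φ α` co-injective. Conversely, injectivity of `φ β` gives `(φ β)⁻¹ ∘ φ β ⊆ id`, which yields the
composition inequality, and co-injectivity of `φ α` gives `φ α ∘ (φ α)⁻¹ ⊆ id`.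
-/

universe u v

/-- Composition of binary relations: `(a,b) ∈ ρ ∘ σ ↔ ∃ c, (c,b) ∈ ρ ∧ (a,c) ∈ σ`
(σ applied first). -/
def RelComp {A C B : Type*} (ρ : Set (C × B)) (σ : Set (A × C)) : Set (A × B) :=
  {p | ∃ c, (c, p.2) ∈ ρ ∧ (p.1, c) ∈ σ}

/-- Inverse of a binary relation. -/
def RelInv {A B : Type*} (ρ : Set (A × B)) : Set (B × A) :=
  {p | (p.2, p.1) ∈ ρ}

/-- Domain of a binary relation. -/
def RelDom {A B : Type*} (ρ : Set (A × B)) : Set A := {a | ∃ b, (a, b) ∈ ρ}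

/-- Range of a binary relation. -/
def RelRng {A B : Type*} (ρ : Set (A × B)) : Set B := {b | ∃ a, (a, b) ∈ ρ}

/-- Identity relation on a subset `S`. -/
def IdOn {A : Type*} (S : Set A) : Set (A × A) := {p | p.1 ∈ S ∧ p.1 = p.2}

/-- Identity relation on the whole type `M`. -/
def IdRel (M : Type*) : Set (M × M) := {p | p.1 = p.2}

/-- A relation is injective if `(b₁,a) ∈ ρ` and `(b₂,a) ∈ ρ` imply `b₁ = b₂`. -/
def RelInjective {A B : Type*} (ρ : Set (A × B)) : Prop :=
  ∀ ⦃b₁ b₂ : A⦄ ⦃a : B⦄, (b₁, a) ∈ ρ → (b₂, a) ∈ ρ → b₁ = b₂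

/-- A relation is co-injective if its inverse is injective. -/
def RelCoinjective {A B : Type*} (ρ : Set (A × B)) : Prop :=
  RelInjective (RelInv ρ)

section Relations

variable {A B C D : Type*}

@[simp]
lemma mem_relComp {ρ : Set (C × B)} {σ : Set (A × C)} {p : A × B} :
    p ∈ RelComp ρ σ ↔ ∃ c, (c, p.2) ∈ ρ ∧ (p.1, c) ∈ σ :=
  Iff.rfl

@[simp]
lemma mem_relInv {ρ : Set (A × B)} {p : B × A} : p ∈ RelInv ρ ↔ (p.2, p.1) ∈ ρ :=
  Iff.rfl

lemma relInv_relComp_relInv (ρ : Set (C × B)) (σ : Set (C × A)) :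
    RelInv (RelComp ρ (RelInv σ)) = RelComp σ (RelInv ρ) := by
  ext ⟨x, y⟩
  simp only [mem_relInv, mem_relComp]
  exact exists_congr fun _ => and_comm

lemma relComp_relInv_subset_idRel {ρ : Set (A × B)} (h : RelCoinjective ρ) :
    RelComp ρ (RelInv ρ) ⊆ IdRel B := by
  rintro ⟨x, y⟩ ⟨c, hy, hx⟩
  exact h hx hy

lemma relComp_relInv_relComp_subset {ρ : Set (C × B)} {σ : Set (C × D)} {τ : Set (C × A)}
    (h : RelInjective σ) :
    RelComp (RelComp ρ (RelInv σ)) (RelComp σ (RelInv τ)) ⊆ RelComp ρ (RelInv τ) := by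
  rintro ⟨x, y⟩ ⟨d, ⟨c₁, hρ, hσ₁⟩, ⟨c₂, hσ₂, hτ⟩⟩
  obtain rfl : c₁ = c₂ := h hσ₁ hσ₂
  exact ⟨c₁, hρ, hτ⟩

end Relations

structure IsSincovFamily {I M : Type*} (Φ : I → I → Set (M × M)) : Prop where
  comp_subset : ∀ α β γ, RelComp (Φ α β) (Φ β γ) ⊆ Φ α γ
  inv_subset : ∀ α β, RelInv (Φ α β) ⊆ Φ β α
  diag_subset : ∀ α, Φ α α ⊆ IdRel M

lemma isSincovFamily_relComp_relInv {I M Z : Type*} {φ : I → Set (Z × M)}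
    (hinj : ∀ α, RelInjective (φ α)) (hcoinj : ∀ α, RelCoinjective (φ α)) :
    IsSincovFamily fun α β => RelComp (φ α) (RelInv (φ β)) where
  comp_subset _ β _ := relComp_relInv_relComp_subset (hinj β)
  inv_subset α β := (relInv_relComp_relInv (φ α) (φ β)).subset
  diag_subset α := relComp_relInv_subset_idRel (hcoinj α)

namespace IsSincovFamily

variable {I M : Type*} {Φ : I → I → Set (M × M)} (hΦ : IsSincovFamily Φ)
include hΦ

lemma swap_mem {α β : I} {x y : M} (h : (x, y) ∈ Φ α β) : (y, x) ∈ Φ β α :=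
  hΦ.inv_subset α β h

lemma trans_mem {α β γ : I} {x y z : M} (hxy : (x, y) ∈ Φ β γ) (hyz : (y, z) ∈ Φ α β) :
    (x, z) ∈ Φ α γ :=
  hΦ.comp_subset α β γ ⟨y, hyz, hxy⟩

lemma diag_mem_left {α β : I} {x y : M} (h : (x, y) ∈ Φ α β) : (y, y) ∈ Φ α α :=
  hΦ.trans_mem (hΦ.swap_mem h) h

lemma diag_mem_right {α β : I} {x y : M} (h : (x, y) ∈ Φ α β) : (x, x) ∈ Φ β β :=
  hΦ.trans_mem h (hΦ.swap_mem h)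

/-- The relation `(β, x) ∼ (α, y) :↔ (x, y) ∈ Φ α β` is only a partial equivalence relation;
the diagonal is added to make it an equivalence relation on all of `I × M`. -/
def setoid : Setoid (I × M) where
  r p q := p = q ∨ (p.2, q.2) ∈ Φ q.1 p.1
  iseqv := by
    refine ⟨fun _ => Or.inl rfl, ?_, ?_⟩
    · rintro p q (rfl | h)
      exacts [Or.inl rfl, Or.inr (hΦ.swap_mem h)]
    · rintro p q r (rfl | hpq) (rfl | hqr)
      exacts [Or.inl rfl, Or.inr hqr, Or.inr hpq, Or.inr (hΦ.trans_mem hpq hqr)]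

lemma mem_of_mk_eq {α β : I} {x y : M}
    (h : (Quotient.mk hΦ.setoid (α, y) : Quotient hΦ.setoid) = Quotient.mk hΦ.setoid (β, x))
    (hy : (y, y) ∈ Φ α α) : (x, y) ∈ Φ α β := by
  rcases Quotient.exact h with h | h
  · obtain ⟨rfl, rfl⟩ := Prod.mk.inj h
    exact hy
  · exact hΦ.swap_mem h

def chart (α : I) : Set (Quotient hΦ.setoid × M) :=
  {p | (p.2, p.2) ∈ Φ α α ∧ p.1 = Quotient.mk hΦ.setoid (α, p.2)}

@[simp]
lemma mem_chart {α : I} {z : Quotient hΦ.setoid} {m : M} :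
    (z, m) ∈ hΦ.chart α ↔ (m, m) ∈ Φ α α ∧ z = Quotient.mk hΦ.setoid (α, m) :=
  Iff.rfl

lemma chart_injective (α : I) : RelInjective (hΦ.chart α) := by
  intro z₁ z₂ m h₁ h₂
  rw [mem_chart] at h₁ h₂
  exact h₁.2.trans h₂.2.symm

lemma chart_coinjective (α : I) : RelCoinjective (hΦ.chart α) := by
  intro m₁ m₂ z h₁ h₂
  rw [mem_relInv, mem_chart] at h₁ h₂
  exact (hΦ.diag_subset α (hΦ.mem_of_mk_eq (h₁.2.symm.trans h₂.2) h₁.1)).symm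

lemma relComp_chart_relInv_chart (α β : I) :
    RelComp (hΦ.chart α) (RelInv (hΦ.chart β)) = Φ α β := by
  ext ⟨x, y⟩
  simp only [mem_relComp, mem_relInv, mem_chart]
  constructor
  · rintro ⟨z, ⟨hy, rfl⟩, -, hz⟩
    exact hΦ.mem_of_mk_eq hz hy
  · intro h
    exact ⟨_, ⟨hΦ.diag_mem_left h, rfl⟩, hΦ.diag_mem_right h, Quotient.sound (Or.inr (hΦ.swap_mem h))⟩

end IsSincovFamily

/-- general solution of Sincov's inequalities. -/
theorem sincov_inequality_general_solution {I : Type u} {M : Type v}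
    (Φ : I → I → Set (M × M)) :
    ((∀ α β γ : I, RelComp (Φ α β) (Φ β γ) ⊆ Φ α γ) ∧
     (∀ α β : I, RelInv (Φ α β) ⊆ Φ β α) ∧
     (∀ α : I, Φ α α ⊆ IdRel M)) ↔
    ∃ (Z : Type (max u v)) (φ : I → Set (Z × M)),
      (∀ α, RelInjective (φ α) ∧ RelCoinjective (φ α)) ∧
      (∀ α β, Φ α β = RelComp (φ α) (RelInv (φ β))) := by
  constructor
  · rintro ⟨hcomp, hinv, hdiag⟩
    have hΦ : IsSincovFamily Φ := ⟨hcomp, hinv, hdiag⟩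
    exact ⟨_, hΦ.chart, fun α => ⟨hΦ.chart_injective α, hΦ.chart_coinjective α⟩,
      fun α β => (hΦ.relComp_chart_relInv_chart α β).symm⟩
  · rintro ⟨Z, φ, hφ, hΦ⟩
    obtain rfl : Φ = fun α β => RelComp (φ α) (RelInv (φ β)) := funext₂ hΦ
    obtain ⟨hcomp, hinv, hdiag⟩ :=
      isSincovFamily_relComp_relInv (fun α => (hφ α).1) fun α => (hφ α).2
    exact ⟨hcomp, hinv, hdiag⟩
end

section
/- Let I, M, Z, Z̄ be sets and let {φ_α}_{α∈I} with φ_α ⊆ Z×M and {φ̄_α}_{α∈I} with φ̄_α ⊆ Z̄×M be two families of binary relations, each relation being both injective and co-injective, such that φ_α ∘ φ_β⁻¹ = φ̄_α ∘ φ̄_β⁻¹ for every (α,β) ∈ I×I. Then there exists a binary relation ω ⊆ Z×Z̄, both injective and co-injective, with domain ∪_{β∈I} dom φ_β and range ∪_{β∈I} dom φ̄_β, such that φ_α = φ̄_α ∘ ω for every α ∈ I. -/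
/-!
Take `ω = ⋃ β, φ'_β⁻¹ ∘ φ_β`. If `(z, m₀) ∈ φ_β`, `(z', m₀) ∈ φ'_β` and `(z', m) ∈ φ'_α`, then
`(m₀, m) ∈ φ'_α ∘ φ'_β⁻¹ = φ_α ∘ φ_β⁻¹` yields `w` with `(w, m₀) ∈ φ_β` and `(w, m) ∈ φ_α`, and
injectivity of `φ_β` forces `w = z`. Hence `φ'_α ∘ ω ⊆ φ_α`, which also makes `ω` injective.
The case `α = β` of the hypothesis says `rng φ_α = rng φ'_α`, giving `φ_α ⊆ φ'_α ∘ ω` and the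
domain of `ω`. Swapping `φ` and `φ'` inverts `ω`, so co-injectivity and the range follow by symmetry.
-/

universe u v

theorem relDom_relInv {A B : Type*} (ρ : Set (A × B)) : RelDom (RelInv ρ) = RelRng ρ := rfl

theorem relDom_relComp_relInv_self {A B : Type*} (ρ : Set (A × B)) :
    RelDom (RelComp ρ (RelInv ρ)) = RelRng ρ := by
  ext m
  constructor
  · rintro ⟨_, a, -, ham⟩
    exact ⟨a, ham⟩
  · rintro ⟨a, ham⟩
    exact ⟨m, a, ham, ham⟩

section SincovGlue

variable {I Z Z' M : Type*} (φ : I → Set (Z × M)) (φ' : I → Set (Z' × M))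

def sincovGlue : Set (Z × Z') := {p | ∃ β m, (p.1, m) ∈ φ β ∧ (p.2, m) ∈ φ' β}

theorem relInv_sincovGlue : RelInv (sincovGlue φ φ') = sincovGlue φ' φ := by
  ext ⟨z', z⟩
  simp only [RelInv, sincovGlue, Set.mem_ofPred_eq, and_comm]

variable {φ φ'}

theorem relDom_sincovGlue (hrng : ∀ β, RelRng (φ β) ⊆ RelRng (φ' β)) :
    RelDom (sincovGlue φ φ') = ⋃ β, RelDom (φ β) := by
  ext z
  simp only [RelDom, Set.mem_ofPred_eq, Set.mem_iUnion]
  constructor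
  · rintro ⟨_, β, m, hzm, -⟩
    exact ⟨β, m, hzm⟩
  · rintro ⟨β, m, hzm⟩
    obtain ⟨z', hz'm⟩ := hrng β ⟨z, hzm⟩
    exact ⟨z', β, m, hzm, hz'm⟩

theorem subset_relComp_sincovGlue (hrng : ∀ β, RelRng (φ β) ⊆ RelRng (φ' β)) (α : I) :
    φ α ⊆ RelComp (φ' α) (sincovGlue φ φ') := by
  rintro ⟨z, m⟩ hzm
  obtain ⟨z', hz'm⟩ := hrng α ⟨z, hzm⟩
  exact ⟨z', hz'm, α, m, hzm, hz'm⟩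

theorem relComp_sincovGlue_subset (hφ : ∀ β, RelInjective (φ β))
    (h : ∀ α β, RelComp (φ' α) (RelInv (φ' β)) ⊆ RelComp (φ α) (RelInv (φ β))) (α : I) :
    RelComp (φ' α) (sincovGlue φ φ') ⊆ φ α := by
  rintro ⟨z, m⟩ ⟨z', hz'm, β, m₀, hzm₀, hz'm₀⟩
  obtain ⟨w, hwm, hwm₀⟩ := h α β (show (m₀, m) ∈ _ from ⟨z', hz'm, hz'm₀⟩)
  obtain rfl : w = z := hφ β hwm₀ hzm₀
  exact hwm

theorem sincovGlue_injective (hφ : ∀ β, RelInjective (φ β))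
    (h : ∀ α β, RelComp (φ' α) (RelInv (φ' β)) ⊆ RelComp (φ α) (RelInv (φ β))) :
    RelInjective (sincovGlue φ φ') := by
  rintro z₁ z₂ z' ⟨β, m, hz₁m, hz'm⟩ hz₂z'
  exact hφ β hz₁m (relComp_sincovGlue_subset hφ h β ⟨z', hz'm, hz₂z'⟩)

end SincovGlue

/-- uniqueness of the generating family up to an injective co-injection ω. -/
theorem sincov_generating_family_unique {I Z Z' M : Type*}
    (φ : I → Set (Z × M)) (φ' : I → Set (Z' × M))
    (hφ : ∀ α, RelInjective (φ α) ∧ RelCoinjective (φ α))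
    (hφ' : ∀ α, RelInjective (φ' α) ∧ RelCoinjective (φ' α))
    (h : ∀ α β, RelComp (φ α) (RelInv (φ β)) = RelComp (φ' α) (RelInv (φ' β))) :
    ∃ ω : Set (Z × Z'),
      RelInjective ω ∧ RelCoinjective ω ∧
      (RelDom ω = ⋃ β, RelDom (φ β)) ∧
      (RelRng ω = ⋃ β, RelDom (φ' β)) ∧
      (∀ α, φ α = RelComp (φ' α) ω) := by
  have hinj β : RelInjective (φ β) := (hφ β).1
  have hinj' β : RelInjective (φ' β) := (hφ' β).1
  have hrng β : RelRng (φ β) = RelRng (φ' β) := by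
    rw [← relDom_relComp_relInv_self, h, relDom_relComp_relInv_self]
  refine ⟨sincovGlue φ φ', sincovGlue_injective hinj fun α β => (h α β).ge, ?_,
    relDom_sincovGlue fun β => (hrng β).le, ?_, fun α => ?_⟩
  · rw [RelCoinjective, relInv_sincovGlue]
    exact sincovGlue_injective hinj' fun α β => (h α β).le
  · rw [← relDom_relInv, relInv_sincovGlue]
    exact relDom_sincovGlue fun β => (hrng β).ge
  · exact (subset_relComp_sincovGlue (fun β => (hrng β).le) α).antisymm
      (relComp_sincovGlue_subset hinj (fun α β => (h α β).ge) α)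
end

section
/- Let I and M be sets and let Φ assign to each pair (α,β) ∈ I×I a binary relation Φ_{αβ} on M satisfying the Sincov inequalities Φ_{αβ}∘Φ_{βγ} ⊆ Φ_{αγ}, Φ_{αβ}⁻¹ ⊆ Φ_{βα}, and Φ_{αα} ⊆ id_M for all α,β,γ ∈ I. Then for every (α,β) ∈ I×I the relation Φ_{αβ} is both injective and co-injective. -/
universe u v

theorem relInjective_of_relComp_relInv_subset_idRel {A B : Type*} {ρ : Set (A × B)}
    (h : RelComp (RelInv ρ) ρ ⊆ IdRel A) : RelInjective ρ :=
  fun b₁ b₂ a hb₁ hb₂ => h (a := (b₁, b₂)) ⟨a, hb₂, hb₁⟩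

theorem relCoinjective_of_relComp_relInv_subset_idRel {A B : Type*} {ρ : Set (A × B)}
    (h : RelComp ρ (RelInv ρ) ⊆ IdRel B) : RelCoinjective ρ :=
  relInjective_of_relComp_relInv_subset_idRel h

theorem relComp_mono {A C B : Type*} {ρ ρ' : Set (C × B)} {σ σ' : Set (A × C)}
    (hρ : ρ ⊆ ρ') (hσ : σ ⊆ σ') : RelComp ρ σ ⊆ RelComp ρ' σ' :=
  fun _ ⟨c, hcb, hac⟩ => ⟨c, hρ hcb, hσ hac⟩

/-- solutions of Sincov's inequalities consist of injective co-injections. -/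
theorem sincov_solution_injective_coinjective {I M : Type*}
    (Φ : I → I → Set (M × M))
    (h1 : ∀ α β γ : I, RelComp (Φ α β) (Φ β γ) ⊆ Φ α γ)
    (h2 : ∀ α β : I, RelInv (Φ α β) ⊆ Φ β α)
    (h3 : ∀ α : I, Φ α α ⊆ IdRel M) :
    ∀ α β : I, RelInjective (Φ α β) ∧ RelCoinjective (Φ α β) := by
  intro α β
  refine ⟨relInjective_of_relComp_relInv_subset_idRel ?_,
    relCoinjective_of_relComp_relInv_subset_idRel ?_⟩
  · calc RelComp (RelInv (Φ α β)) (Φ α β) ⊆ RelComp (Φ β α) (Φ α β) :=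
          relComp_mono (h2 α β) subset_rfl
      _ ⊆ Φ β β := h1 β α β
      _ ⊆ IdRel M := h3 β
  · calc RelComp (Φ α β) (RelInv (Φ α β)) ⊆ RelComp (Φ α β) (Φ β α) :=
          relComp_mono subset_rfl (h2 α β)
      _ ⊆ Φ α α := h1 α β α
      _ ⊆ IdRel M := h3 α
end
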